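/- For the rumor process on any finite connected graph G = (V,E) with each site initially knowing a distinct information, the expected total propagation time satisfies E[τ_V] ≤ 2·E[τ_x] for every site x in V. -/

import Mathlib

open scoped ENNReal Classical

/-- One step of the rumor process: the two endpoints of the chosen edge `e`
share all their informations. -/
noncomputable def updateInfo {V I : Type*} (f : V → Set I) (e : Sym2 V) : V → Set I :=
  fun v => if v ∈ e then ⋃ w ∈ {w | w ∈ e}, f w else f v

/-- Probability of a property under the uniform distribution on a finite type. -/
noncomputable def unifProb {α : Type*} [Fintype α] (p : α → Prop) : ℝ≥0∞ :=
  ((Finset.univ.filter p).card : ℝ≥0∞) / (Fintype.card α : ℝ≥0∞)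

/-- Expectation of a nonnegative function under the uniform distribution on a finite type. -/
noncomputable def unifExp {α : Type*} [Fintype α] (g : α → ℝ≥0∞) : ℝ≥0∞ :=
  (∑ a : α, g a) / (Fintype.card α : ℝ≥0∞)

/-- Probability that, after `t` i.i.d. uniform edge choices from the graph `G`,
the information configuration started from `f` satisfies `p`. -/
noncomputable def stepProb {n : ℕ} (G : SimpleGraph (Fin n)) {I : Type*}
    (f : Fin n → Set I) (p : (Fin n → Set I) → Prop) (t : ℕ) : ℝ≥0∞ :=
  letI : Fintype G.edgeSet := (Set.toFinite _).fintype
  unifProb (fun σ : Fin t → G.edgeSet =>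
    p (((List.ofFn fun i => ((σ i : Sym2 (Fin n)))).foldl updateInfo f)))

/-- Expected hitting time of the (monotone) property `p` for the rumor process on `G`
started from configuration `f`: `E[τ] = ∑_{t ≥ 0} P(τ > t)`. -/
noncomputable def expTime {n : ℕ} (G : SimpleGraph (Fin n)) {I : Type*}
    (f : Fin n → Set I) (p : (Fin n → Set I) → Prop) : ℝ≥0∞ :=
  ∑' t : ℕ, stepProb G f (fun c => ¬ p c) t

/-- Initial scenario where each of the `n` sites knows a distinct information. -/
def initDistinct (n : ℕ) : Fin n → Set ℕ := fun v => {(v : ℕ)}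

/-- Initial scenario with `n-1` informations: information `0` is known by sites `0` and `1`,
and information `v-1` is known by site `v` for `v ≥ 2`. -/
def initDoubled (n : ℕ) : Fin n → Set ℕ := fun v => {((v : ℕ) - 1)}

/-- `Mq n k`: expected time until informations `0,…,k-1` are known by all sites of `K_n`,
starting from the all-distinct configuration. -/
noncomputable def Mq (n k : ℕ) : ℝ≥0∞ :=
  expTime ⊤ (initDistinct n) (fun f => ∀ v : Fin n, ∀ j < k, j ∈ f v)

/-- `Aq n k`: expected time until the first `k-1` informations are known by all sites of `K_n`,
starting from the configuration with information `0` doubled. -/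
noncomputable def Aq (n k : ℕ) : ℝ≥0∞ :=
  expTime ⊤ (initDoubled n) (fun f => ∀ v : Fin n, ∀ j < k - 1, j ∈ f v)

/-- The `m`-th harmonic number. -/
noncomputable def H (m : ℕ) : ℝ := ∑ j ∈ Finset.range m, (1 : ℝ) / (j + 1)

/-!
Let `σ` be the first time at which site `x` knows every information. Reversing the sequence of
chosen edges turns "`x` knows everything" into "everybody knows `x`", and reversal preserves the
uniform law of edge sequences, so `E[σ] = E[τ_x]`. Once `x` knows everything, everybody knows
everything as soon as the information of `x` has reached every site; by the strong Markov property
at `σ` this takes an independent copy of `τ_x`, hence `E[τ_V] ≤ E[σ] + E[τ_x] = 2 E[τ_x]`.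
-/

open Finset in
lemma ENNReal.tsum_mul_tsum_eq_tsum_sum_range (f g : ℕ → ℝ≥0∞) :
    (∑' n, f n) * ∑' n, g n = ∑' n, ∑ k ∈ range (n + 1), f k * g (n - k) := by
  simp_rw [← Nat.sum_antidiagonal_eq_sum_range_succ fun k l => f k * g l]
  calc (∑' n, f n) * ∑' n, g n = ∑' kl : ℕ × ℕ, f kl.1 * g kl.2 := by
        rw [ENNReal.tsum_prod (f := fun k l => f k * g l), ← ENNReal.tsum_mul_right]
        simp_rw [ENNReal.tsum_mul_left]
    _ = ∑' x : Σ n : ℕ, antidiagonal n, f (x.2 : ℕ × ℕ).1 * g (x.2 : ℕ × ℕ).2 :=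
        (HasAntidiagonal.sigmaAntidiagonalEquivProd.tsum_eq
          (fun kl : ℕ × ℕ => f kl.1 * g kl.2)).symm
    _ = _ := by
        rw [ENNReal.tsum_sigma']
        refine tsum_congr fun n => ?_
        rw [tsum_fintype]
        exact sum_coe_sort (antidiagonal n) (fun kl => f kl.1 * g kl.2)

lemma List.ofFn_comp_rev {α : Type*} {n : ℕ} (σ : Fin n → α) :
    List.ofFn (fun i => σ i.rev) = (List.ofFn σ).reverse := by
  refine List.ext_getElem (by simp) fun i h₁ h₂ => ?_
  simp only [List.getElem_ofFn, List.getElem_reverse, List.length_ofFn]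
  congr 1
  ext
  simp only [Fin.val_rev]
  omega

section UniformProbability

variable {α β ι : Type*} [Fintype α] [Fintype β]

lemma unifProb_eq (p : α → Prop) [DecidablePred p] :
    unifProb p = ((Finset.univ.filter p).card : ℝ≥0∞) / Fintype.card α := by
  unfold unifProb
  congr

lemma unifProb_le_one (p : α → Prop) : unifProb p ≤ 1 := by
  unfold unifProb
  calc _ ≤ (Fintype.card α : ℝ≥0∞) / Fintype.card α := by
        gcongr; exact Finset.card_filter_le _ _
    _ ≤ 1 := ENNReal.div_self_le_one

lemma unifProb_of_isEmpty [IsEmpty α] (p : α → Prop) : unifProb p = 0 := by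
  simp [unifProb]

lemma unifProb_true [Nonempty α] : unifProb (fun _ : α => True) = 1 := by
  simp [unifProb, ENNReal.div_self]

lemma unifProb_mono {p q : α → Prop} (h : ∀ a, p a → q a) : unifProb p ≤ unifProb q := by
  unfold unifProb
  gcongr with a
  exact h a

lemma unifProb_or_le (p q : α → Prop) :
    unifProb (fun a => p a ∨ q a) ≤ unifProb p + unifProb q := by
  rw [unifProb_eq, unifProb_eq p, unifProb_eq q, ENNReal.div_add_div_same, Finset.filter_or]
  gcongr
  exact_mod_cast Finset.card_union_le _ _

lemma unifProb_exists_mem_le (S : Finset ι) (p : ι → α → Prop) :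
    unifProb (fun a => ∃ i ∈ S, p i a) ≤ ∑ i ∈ S, unifProb (p i) := by
  rw [unifProb_eq]
  simp only [unifProb, div_eq_mul_inv, ← Finset.sum_mul]
  gcongr
  rw [← Nat.cast_sum]
  gcongr
  refine (Finset.card_le_card fun a ha => ?_).trans Finset.card_biUnion_le
  obtain ⟨i, hi, hpa⟩ := (Finset.mem_filter.1 ha).2
  exact Finset.mem_biUnion.2 ⟨i, hi, Finset.mem_filter.2 ⟨Finset.mem_univ a, hpa⟩⟩

lemma sum_unifProb_le_one (S : Finset ι) (p : ι → α → Prop)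
    (h : ∀ a, ∀ i ∈ S, ∀ j ∈ S, p i a → p j a → i = j) :
    ∑ i ∈ S, unifProb (p i) ≤ 1 := by
  simp only [unifProb, div_eq_mul_inv, ← Finset.sum_mul]
  rw [← Nat.cast_sum, ← Finset.card_biUnion]
  · rw [← div_eq_mul_inv]
    calc _ ≤ (Fintype.card α : ℝ≥0∞) / Fintype.card α := by
          gcongr; exact Finset.card_le_univ _
      _ ≤ 1 := ENNReal.div_self_le_one
  · intro i hi j hj hij
    exact Finset.disjoint_filter.2 fun a _ hpi hpj => hij (h a i hi j hj hpi hpj)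

lemma unifProb_comp_equiv (e : α ≃ β) (p : β → Prop) :
    unifProb (fun a => p (e a)) = unifProb p := by
  unfold unifProb
  rw [Fintype.card_congr e, ← Fintype.card_subtype, ← Fintype.card_subtype]
  congr 2
  exact Fintype.card_congr (e.subtypeEquiv fun _ => Iff.rfl)

lemma unifProb_prod (p : α → Prop) (q : β → Prop) :
    unifProb (fun x : α × β => p x.1 ∧ q x.2) = unifProb p * unifProb q := by
  rw [unifProb_eq, unifProb_eq p, unifProb_eq q, ← Finset.univ_product_univ,
    Finset.filter_product, Finset.card_product, Fintype.card_prod, Nat.cast_mul, Nat.cast_mul,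
    ENNReal.mul_div_mul_comm (Or.inr (ENNReal.natCast_ne_top _))
      (Or.inl (ENNReal.natCast_ne_top _))]

lemma unifProb_take_drop {s u : ℕ} (hs : s ≤ u) (P Q : List α → Prop) :
    unifProb (fun σ : Fin u → α => P ((List.ofFn σ).take s) ∧ Q ((List.ofFn σ).drop s)) =
      unifProb (fun σ : Fin s → α => P (List.ofFn σ)) *
        unifProb (fun σ : Fin (u - s) → α => Q (List.ofFn σ)) := by
  obtain ⟨t, rfl⟩ := Nat.exists_eq_add_of_le hs
  rw [Nat.add_sub_cancel_left, ← unifProb_prod,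
    ← unifProb_comp_equiv (Fin.appendEquiv s t)]
  congr! 2 with x
  change P ((List.ofFn (Fin.append x.1 x.2)).take s) ∧
    Q ((List.ofFn (Fin.append x.1 x.2)).drop s) ↔ _
  rw [List.ofFn_fin_append, List.take_left' (List.length_ofFn),
    List.drop_left' List.length_ofFn]

end UniformProbability

section FirstHit

variable {α : Type*}

def IsFirstHit (A : List α → Prop) (w : List α) (s : ℕ) : Prop :=
  A (w.take s) ∧ ∀ r < s, ¬ A (w.take r)

lemma IsFirstHit.eq {A : List α → Prop} {w : List α} {s s' : ℕ}
    (h : IsFirstHit A w s) (h' : IsFirstHit A w s') : s = s' := by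
  by_contra hne
  rcases Nat.lt_or_gt_of_ne hne with hlt | hlt
  · exact h'.2 s hlt h.1
  · exact h.2 s' hlt h'.1

lemma isFirstHit_take_iff {A : List α → Prop} {w : List α} {s : ℕ} :
    IsFirstHit A (w.take s) s ↔ IsFirstHit A w s := by
  simp only [IsFirstHit, List.take_take, min_self]
  refine and_congr_right fun _ => forall₂_congr fun r hr => ?_
  rw [min_eq_left hr.le]

lemma not_or_exists_isFirstHit {A B C : List α → Prop}
    (hABC : ∀ w₁ w₂, A w₁ → B w₂ → C (w₁ ++ w₂)) {w : List α} (hw : ¬ C w) :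
    ¬ A w ∨ ∃ s ∈ Finset.range (w.length + 1), IsFirstHit A w s ∧ ¬ B (w.drop s) := by
  by_cases hA : A w
  · have hex : ∃ s, A (w.take s) := ⟨w.length, by rwa [List.take_length]⟩
    refine Or.inr ⟨Nat.find hex, ?_, ⟨Nat.find_spec hex, fun r => Nat.find_min hex⟩,
      fun hB => hw ?_⟩
    · exact Finset.mem_range_succ_iff.2 (Nat.find_min' hex (by rwa [List.take_length]))
    · simpa using hABC _ _ (Nat.find_spec hex) hB
  · exact Or.inl hA

end FirstHit

section HittingTime

variable {α : Type*} [Fintype α]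

/-- `∑ₜ P(A fails on a uniform word of length t)`: the expected first time `A` holds when `A`
is stable under appending letters, as the properties of the rumor process are. -/
noncomputable def expHittingTime (A : List α → Prop) : ℝ≥0∞ :=
  ∑' t, unifProb fun σ : Fin t → α => ¬ A (List.ofFn σ)

lemma expHittingTime_comp_reverse (A : List α → Prop) :
    expHittingTime (fun w => A w.reverse) = expHittingTime A := by
  refine tsum_congr fun t => ?_
  rw [← unifProb_comp_equiv (Equiv.arrowCongr Fin.revPerm (Equiv.refl α))
    (fun σ => ¬ A (List.ofFn σ))]
  congr! 3 with σ
  change A _ ↔ A (List.ofFn fun i => σ i.rev)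
  rw [List.ofFn_comp_rev]

lemma tsum_unifProb_isFirstHit_le_one (A : List α → Prop) :
    ∑' s, unifProb (fun σ : Fin s → α => IsFirstHit A (List.ofFn σ) s) ≤ 1 := by
  refine ENNReal.tsum_le_of_sum_range_le fun k => ?_
  rcases isEmpty_or_nonempty α with hα | hα
  · calc _ ≤ ∑ s ∈ Finset.range 1,
          unifProb (fun σ : Fin s → α => IsFirstHit A (List.ofFn σ) s) := by
          refine Finset.sum_le_sum_of_ne_zero fun s _ hs => ?_
          obtain _ | s := s
          · simp
          · exact absurd (unifProb_of_isEmpty _) hs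
      _ ≤ 1 := by simpa using unifProb_le_one _
  · calc _ = ∑ s ∈ Finset.range k,
          unifProb (fun σ : Fin k → α => IsFirstHit A (List.ofFn σ) s) := by
          refine Finset.sum_congr rfl fun s hs => ?_
          have := unifProb_take_drop (Finset.mem_range.1 hs).le
            (fun w => IsFirstHit A w s) (fun _ => True)
          simp only [and_true, isFirstHit_take_iff, unifProb_true, mul_one] at this
          exact this.symm
      _ ≤ 1 := sum_unifProb_le_one _ _ fun σ _ _ _ _ h h' => h.eq h'

lemma unifProb_not_le_of_append {A B C : List α → Prop}
    (hABC : ∀ w₁ w₂, A w₁ → B w₂ → C (w₁ ++ w₂)) (u : ℕ) :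
    unifProb (fun σ : Fin u → α => ¬ C (List.ofFn σ)) ≤
      unifProb (fun σ : Fin u → α => ¬ A (List.ofFn σ)) +
        ∑ s ∈ Finset.range (u + 1),
          unifProb (fun σ : Fin s → α => IsFirstHit A (List.ofFn σ) s) *
            unifProb (fun σ : Fin (u - s) → α => ¬ B (List.ofFn σ)) := by
  set E : ℕ → (Fin u → α) → Prop := fun s σ =>
    IsFirstHit A (List.ofFn σ) s ∧ ¬ B ((List.ofFn σ).drop s)
  have hE : ∀ s ∈ Finset.range (u + 1), unifProb (E s) =
      unifProb (fun σ : Fin s → α => IsFirstHit A (List.ofFn σ) s) *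
        unifProb (fun σ : Fin (u - s) → α => ¬ B (List.ofFn σ)) := fun s hs => by
    rw [← unifProb_take_drop (Finset.mem_range_succ_iff.1 hs) (fun w => IsFirstHit A w s)
      (fun w => ¬ B w)]
    simp only [E, isFirstHit_take_iff]
  calc _ ≤ unifProb (fun σ : Fin u → α =>
          ¬ A (List.ofFn σ) ∨ ∃ s ∈ Finset.range (u + 1), E s σ) :=
        unifProb_mono fun σ hσ => by simpa using not_or_exists_isFirstHit hABC hσ
    _ ≤ unifProb (fun σ : Fin u → α => ¬ A (List.ofFn σ)) +
          unifProb (fun σ => ∃ s ∈ Finset.range (u + 1), E s σ) := unifProb_or_le _ _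
    _ ≤ _ := by
      gcongr
      exact (unifProb_exists_mem_le _ _).trans (Finset.sum_le_sum fun s hs => (hE s hs).le)

theorem expHittingTime_le_add {A B C : List α → Prop}
    (hABC : ∀ w₁ w₂, A w₁ → B w₂ → C (w₁ ++ w₂)) :
    expHittingTime C ≤ expHittingTime A + expHittingTime B := by
  calc expHittingTime C
      ≤ ∑' u, (unifProb (fun σ : Fin u → α => ¬ A (List.ofFn σ)) +
          ∑ s ∈ Finset.range (u + 1),
            unifProb (fun σ : Fin s → α => IsFirstHit A (List.ofFn σ) s) *
              unifProb (fun σ : Fin (u - s) → α => ¬ B (List.ofFn σ))) :=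
        ENNReal.tsum_le_tsum (unifProb_not_le_of_append hABC)
    _ = expHittingTime A +
          (∑' s, unifProb (fun σ : Fin s → α => IsFirstHit A (List.ofFn σ) s)) *
            expHittingTime B := by
        rw [ENNReal.tsum_add, expHittingTime, expHittingTime,
          ENNReal.tsum_mul_tsum_eq_tsum_sum_range]
    _ ≤ expHittingTime A + 1 * expHittingTime B := by
        gcongr
        exact tsum_unifProb_isFirstHit_le_one A
    _ = expHittingTime A + expHittingTime B := by rw [one_mul]

end HittingTime

section Knowledge

variable {V : Type*}

/-- The informations known at each site after the edges of `w` were chosen in turn, information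
`v` being the one initially known only at site `v`. -/
noncomputable def knowledge (w : List (Sym2 V)) : V → Set V :=
  w.foldl updateInfo fun v => {v}

lemma updateInfo_eq_biUnion {I : Type*} (g : V → Set I) (e : Sym2 V) (v : V) :
    updateInfo g e v = ⋃ u ∈ updateInfo (fun v => {v}) e v, g u := by
  unfold updateInfo
  split_ifs <;> simp

lemma foldl_updateInfo_eq_biUnion {I : Type*} (w : List (Sym2 V)) (g : V → Set I) (v : V) :
    w.foldl updateInfo g v = ⋃ u ∈ knowledge w v, g u := by
  induction w using List.reverseRecOn generalizing v with
  | nil => simp [knowledge]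
  | append_singleton w e ih =>
    have hK : knowledge (w ++ [e]) v = ⋃ u ∈ updateInfo (fun v => {v}) e v, knowledge w u := by
      rw [knowledge, List.foldl_append]
      exact updateInfo_eq_biUnion _ e v
    rw [List.foldl_append, hK]
    simp_rw [Set.biUnion_iUnion, ← ih]
    exact updateInfo_eq_biUnion _ e v

lemma knowledge_append (w₁ w₂ : List (Sym2 V)) (v : V) :
    knowledge (w₁ ++ w₂) v = ⋃ u ∈ knowledge w₂ v, knowledge w₁ u := by
  rw [knowledge, List.foldl_append]
  exact foldl_updateInfo_eq_biUnion w₂ _ v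

lemma mem_knowledge_singleton_comm (e : Sym2 V) (u y : V) :
    y ∈ knowledge [e] u ↔ u ∈ knowledge [e] y := by
  simp only [knowledge, List.foldl_cons, List.foldl_nil, updateInfo]
  split_ifs <;> aesop

lemma mem_knowledge_reverse {w : List (Sym2 V)} {v y : V} :
    y ∈ knowledge w v ↔ v ∈ knowledge w.reverse y := by
  induction w generalizing v y with
  | nil => simp [knowledge, eq_comm]
  | cons e w ih =>
    rw [← List.singleton_append, knowledge_append, List.reverse_append, knowledge_append]
    simp only [Set.mem_iUnion, exists_prop, ← ih, mem_knowledge_singleton_comm e _ y, and_comm,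
      List.reverse_singleton]

lemma knowledge_append_eq_univ {w₁ w₂ : List (Sym2 V)} {x : V}
    (h₁ : ∀ y, y ∈ knowledge w₁ x) (h₂ : ∀ v, x ∈ knowledge w₂ v) (v : V) :
    knowledge (w₁ ++ w₂) v = Set.univ := by
  rw [knowledge_append]
  exact Set.eq_univ_of_forall fun y => Set.mem_biUnion (h₂ v) (h₁ y)

end Knowledge

lemma expTime_eq_expHittingTime {n : ℕ} {G : SimpleGraph (Fin n)} [Fintype G.edgeSet]
    {I : Type*} (f : Fin n → Set I) (p : (Fin n → Set I) → Prop) :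
    expTime G f p =
      expHittingTime fun w : List G.edgeSet => p ((w.map Subtype.val).foldl updateInfo f) := by
  unfold expTime stepProb expHittingTime
  congr! with t σ
  exact List.map_ofFn.symm

theorem total_propagation_at_most_twice_single_general (n : ℕ) (G : SimpleGraph (Fin n))
    (x : Fin n) :
    expTime G (fun v => ({v} : Set (Fin n))) (fun f => ∀ v : Fin n, f v = Set.univ)
      ≤ 2 * expTime G (fun v => ({v} : Set (Fin n))) (fun f => ∀ v : Fin n, x ∈ f v) := by
  rw [expTime_eq_expHittingTime, expTime_eq_expHittingTime, two_mul]
  set knowsAll := fun w : List G.edgeSet => ∀ y, y ∈ knowledge (w.map Subtype.val) x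
  set knownByAll := fun w : List G.edgeSet => ∀ v, x ∈ knowledge (w.map Subtype.val) v
  have hreverse : expHittingTime knowsAll = expHittingTime knownByAll := by
    rw [← expHittingTime_comp_reverse knownByAll]
    simp only [knowsAll, knownByAll, List.map_reverse, ← mem_knowledge_reverse]
  calc _ ≤ expHittingTime knowsAll + expHittingTime knownByAll :=
      expHittingTime_le_add fun w₁ w₂ h₁ h₂ v => by
        rw [List.map_append]
        exact knowledge_append_eq_univ h₁ h₂ v
    _ = _ := by rw [hreverse]; rfl

theorem total_propagation_at_most_twice_single (n : ℕ) (G : SimpleGraph (Fin n))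
    (hG : G.Connected) (x : Fin n) :
    expTime G (fun v => ({v} : Set (Fin n))) (fun f => ∀ v : Fin n, f v = Set.univ)
      ≤ 2 * expTime G (fun v => ({v} : Set (Fin n))) (fun f => ∀ v : Fin n, x ∈ f v) :=
  total_propagation_at_most_twice_single_general n G x
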